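/- arXiv:2605.09353 — 10 statements merged into one kernel-verified Lean document; each statement's English description precedes it below -/
import Mathlib

section
/- Let A and B be disjoint nonempty finite sets, U = A ∪ B, and Y a finite set. Let P_U^A be a pmf on A, P_U^B a pmf on B, W₀ a pmf on Y with W₀(y) > 0 for all y, and for each u ∈ A let T(·|u) be a pmf on Y and for each u ∈ B let R(·|u) be a pmf on Y. For (μ₁,μ₂) ∈ ℝ² define P^{μ₁,μ₂} : U × Y → ℝ by P^{μ₁,μ₂}(u,y) = (1−μ₁)·P_U^A(u)·((1−μ₂)·W₀(y) + μ₂·T(y|u)) for u ∈ A and P^{μ₁,μ₂}(u,y) = μ₁·P_U^B(u)·R(y|u) for u ∈ B, and let I(μ₁,μ₂) denote the mutual information of P^{μ₁,μ₂}. Then the map μ₁ ↦ I(μ₁, 0) has a derivative at μ₁ = 0, equal to ∑_{u∈B} P_U^B(u)·D(R(·|u) ‖ W₀). -/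
open Real

/-- Kullback–Leibler divergence of finite-alphabet "distributions" `p`, `q`. -/
noncomputable def klDiv {Z : Type*} [Fintype Z] (p q : Z → ℝ) : ℝ :=
  ∑ z, p z * (Real.log (p z) - Real.log (q z))

/-- Mutual information of a joint function `P` on a product of finite alphabets. -/
noncomputable def mutualInfo {U Y : Type*} [Fintype U] [Fintype Y] (P : U → Y → ℝ) : ℝ :=
  ∑ u, ∑ y, P u y *
    (Real.log (P u y) - Real.log (∑ y', P u y') - Real.log (∑ u', P u' y))

/-!
With μ₂ = 0 the joint law is an input law `w + μ₁ • d` (`w = P_U^A` on `A`, `d = -P_U^A` on `A`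
and `P_U^B` on `B`) fed through a fixed channel `V` (`V u = W₀` on `A`, `V u = R(·|u)` on `B`), so
`I = ∑ᵤ (w u + μ₁ d u) D(V u ‖ q_{μ₁})` with `q_{μ₁}` the output law and `q₀ = W₀`.
Differentiating, the terms coming from the moving output law add up to
`-∑_y q'(y) = -∑ᵤ d u = 0`, leaving `∑ᵤ d u · D(V u ‖ W₀)`, in which `D(W₀ ‖ W₀) = 0` kills `A`.
-/

lemma sum_ite_mem_eq_add_of_disjoint_of_union_eq_univ {ι M : Type*} [Fintype ι] [DecidableEq ι]
    [AddCommMonoid M] {A B : Finset ι} (hdisj : Disjoint A B) (hcover : A ∪ B = Finset.univ)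
    (f g : ι → M) : ∑ i, (if i ∈ A then f i else g i) = ∑ i ∈ A, f i + ∑ i ∈ B, g i := by
  rw [← hcover, Finset.sum_union hdisj, Finset.sum_ite_of_true fun _ hi => hi,
    Finset.sum_ite_of_false fun _ hi => Finset.disjoint_right.mp hdisj hi]

lemma klDiv_self {Z : Type*} [Fintype Z] (p : Z → ℝ) : klDiv p p = 0 := by
  simp [klDiv]

lemma mul_mul_log_mul_sub_log_sub_log (a c d : ℝ) :
    a * c * (Real.log (a * c) - Real.log a - Real.log d) = a * c * (Real.log c - Real.log d) := by
  rcases eq_or_ne a 0 with rfl | ha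
  · simp
  rcases eq_or_ne c 0 with rfl | hc
  · simp
  rw [Real.log_mul ha hc]
  ring

def channelOutput {U Y : Type*} [Fintype U] (w : U → ℝ) (V : U → Y → ℝ) (y : Y) : ℝ :=
  ∑ u, w u * V u y

section Channel

variable {U Y : Type*} [Fintype U]

lemma channelOutput_add_mul (w d : U → ℝ) (V : U → Y → ℝ) (μ : ℝ) :
    channelOutput (fun u => w u + μ * d u) V
      = fun y => channelOutput w V y + μ * channelOutput d V y := by
  funext y
  simp only [channelOutput, Finset.mul_sum, ← Finset.sum_add_distrib]
  exact Finset.sum_congr rfl fun u _ => by ring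

lemma sum_channelOutput [Fintype Y] (w : U → ℝ) {V : U → Y → ℝ} (hV : ∀ u, ∑ y, V u y = 1) :
    ∑ y, channelOutput w V y = ∑ u, w u := by
  simp only [channelOutput]
  rw [Finset.sum_comm]
  simp only [← Finset.mul_sum, hV, mul_one]

lemma mutualInfo_mul_eq_sum_klDiv [Fintype Y] (w : U → ℝ) {V : U → Y → ℝ}
    (hV : ∀ u, ∑ y, V u y = 1) :
    mutualInfo (fun u y => w u * V u y) = ∑ u, w u * klDiv (V u) (channelOutput w V) := by
  have hrow (u : U) : ∑ y, w u * V u y = w u := by rw [← Finset.mul_sum, hV, mul_one]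
  simp only [mutualInfo, klDiv, hrow, Finset.mul_sum]
  refine Finset.sum_congr rfl fun u _ => Finset.sum_congr rfl fun y _ => ?_
  rw [mul_mul_log_mul_sub_log_sub_log, channelOutput, mul_assoc]

lemma hasDerivAt_klDiv_add_mul [Fintype Y] (p q r : Y → ℝ) (hq : ∀ y, q y ≠ 0) :
    HasDerivAt (fun μ => klDiv p (fun y => q y + μ * r y)) (-∑ y, p y * (r y / q y)) 0 := by
  have hlog (y : Y) : HasDerivAt (fun μ => Real.log (q y + μ * r y)) (r y / q y) 0 := by
    have hline := ((hasDerivAt_id (0 : ℝ)).mul_const (r y)).const_add (q y)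
    simpa using hline.log (by simpa using hq y)
  rw [← mul_neg_one, Finset.sum_mul]
  exact HasDerivAt.fun_sum fun y _ => by
    simpa using ((hlog y).const_sub (Real.log (p y))).const_mul (p y)

theorem hasDerivAt_mutualInfo_add_mul [Fintype Y] (w d : U → ℝ) {V : U → Y → ℝ}
    (hV : ∀ u, ∑ y, V u y = 1) (hd : ∑ u, d u = 0) (hq : ∀ y, channelOutput w V y ≠ 0) :
    HasDerivAt (fun μ => mutualInfo (fun u y => (w u + μ * d u) * V u y))
      (∑ u, d u * klDiv (V u) (channelOutput w V)) 0 := by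
  set q := channelOutput w V
  set r := channelOutput d V
  have hcross : ∑ u, w u * ∑ y, V u y * (r y / q y) = 0 := by
    calc ∑ u, w u * ∑ y, V u y * (r y / q y) = ∑ y, q y * (r y / q y) := by
          simp only [Finset.mul_sum, q, channelOutput, Finset.sum_mul]
          rw [Finset.sum_comm]
          exact Finset.sum_congr rfl fun _ _ => Finset.sum_congr rfl fun _ _ => by ring
      _ = ∑ y, r y := Finset.sum_congr rfl fun y _ => mul_div_cancel₀ _ (hq y)
      _ = 0 := by rw [sum_channelOutput d hV, hd]
  simp only [mutualInfo_mul_eq_sum_klDiv _ hV, channelOutput_add_mul]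
  have hterm (u : U) := (((hasDerivAt_id (0 : ℝ)).mul_const (d u)).const_add (w u)).mul
    (hasDerivAt_klDiv_add_mul (V u) q r hq)
  refine (HasDerivAt.fun_sum fun u _ => hterm u).congr_deriv ?_
  simp only [id, one_mul, zero_mul, add_zero, mul_neg, Finset.sum_add_distrib,
    Finset.sum_neg_distrib, hcross, neg_zero]

end Channel

theorem stmt_0_general {U Y : Type*} [Fintype U] [Fintype Y] [DecidableEq U]
    (A B : Finset U) (hdisj : Disjoint A B)
    (hcover : A ∪ B = Finset.univ)
    (PA PB : U → ℝ) (W₀ : Y → ℝ) (T R : U → Y → ℝ)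
    (hPA1 : ∑ u ∈ A, PA u = 1)
    (hPB1 : ∑ u ∈ B, PB u = 1)
    (hW0pos : ∀ y, 0 < W₀ y) (hW0sum : ∑ y, W₀ y = 1)
    (hR1 : ∀ u ∈ B, ∑ y, R u y = 1)
    (I : ℝ → ℝ → ℝ)
    (hI : ∀ μ₁ μ₂, I μ₁ μ₂ = mutualInfo (fun (u : U) (y : Y) =>
      if u ∈ A then (1 - μ₁) * PA u * ((1 - μ₂) * W₀ y + μ₂ * T u y)
      else μ₁ * PB u * R u y)) :
    HasDerivAt (fun μ₁ => I μ₁ 0) (∑ u ∈ B, PB u * klDiv (R u) W₀) 0 := by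
  have hsplit := sum_ite_mem_eq_add_of_disjoint_of_union_eq_univ (M := ℝ) hdisj hcover
  set w : U → ℝ := fun u => if u ∈ A then PA u else 0
  set d : U → ℝ := fun u => if u ∈ A then -PA u else PB u
  set V : U → Y → ℝ := fun u => if u ∈ A then W₀ else R u
  have hV (u : U) : ∑ y, V u y = 1 := by
    by_cases hu : u ∈ A
    · simpa [V, hu] using hW0sum
    · have huB : u ∈ B := by simpa [hu] using hcover.ge (Finset.mem_univ u)
      simpa [V, hu] using hR1 u huB
  have hq : channelOutput w V = W₀ := by
    funext y
    have hwV (u : U) : w u * V u y = if u ∈ A then PA u * W₀ y else 0 := by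
      by_cases hu : u ∈ A <;> simp [w, V, hu]
    simp only [channelOutput, hwV, hsplit, ← Finset.sum_mul, hPA1]
    simp
  have hd : ∑ u, d u = 0 := by
    rw [hsplit, Finset.sum_neg_distrib, hPA1, hPB1]
    ring
  have hI0 : (fun μ => I μ 0) = fun μ => mutualInfo (fun u y => (w u + μ * d u) * V u y) := by
    funext μ
    rw [hI]
    congr 1
    funext u y
    by_cases hu : u ∈ A <;> simp only [w, d, V, hu, if_true, if_false] <;> ring
  have hdiv (u : U) :
      d u * klDiv (V u) W₀ = if u ∈ A then 0 else PB u * klDiv (R u) W₀ := by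
    by_cases hu : u ∈ A <;> simp [d, V, hu, klDiv_self]
  rw [hI0]
  refine (hasDerivAt_mutualInfo_add_mul w d hV hd (by simp [hq, (hW0pos _).ne'])).congr_deriv ?_
  simp only [hq, hdiv, hsplit, Finset.sum_const_zero, zero_add]

theorem stmt_0 {U Y : Type*} [Fintype U] [Fintype Y] [DecidableEq U]
    (A B : Finset U) (hdisj : Disjoint A B) (hAne : A.Nonempty) (hBne : B.Nonempty)
    (hcover : A ∪ B = Finset.univ)
    (PA PB : U → ℝ) (W₀ : Y → ℝ) (T R : U → Y → ℝ)
    (hPA0 : ∀ u ∈ A, 0 ≤ PA u) (hPA1 : ∑ u ∈ A, PA u = 1)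
    (hPB0 : ∀ u ∈ B, 0 ≤ PB u) (hPB1 : ∑ u ∈ B, PB u = 1)
    (hW0pos : ∀ y, 0 < W₀ y) (hW0sum : ∑ y, W₀ y = 1)
    (hT0 : ∀ u ∈ A, ∀ y, 0 ≤ T u y) (hT1 : ∀ u ∈ A, ∑ y, T u y = 1)
    (hR0 : ∀ u ∈ B, ∀ y, 0 ≤ R u y) (hR1 : ∀ u ∈ B, ∑ y, R u y = 1)
    (I : ℝ → ℝ → ℝ)
    (hI : ∀ μ₁ μ₂, I μ₁ μ₂ = mutualInfo (fun (u : U) (y : Y) =>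
      if u ∈ A then (1 - μ₁) * PA u * ((1 - μ₂) * W₀ y + μ₂ * T u y)
      else μ₁ * PB u * R u y)) :
    HasDerivAt (fun μ₁ => I μ₁ 0) (∑ u ∈ B, PB u * klDiv (R u) W₀) 0 :=
  stmt_0_general A B hdisj hcover PA PB W₀ T R hPA1 hPB1 hW0pos hW0sum hR1 I hI
end

section
/- Let A and B be disjoint nonempty finite sets, U = A ∪ B, and Y a finite set. Let P_U^A be a pmf on A, P_U^B a pmf on B, W₀ a pmf on Y with W₀(y) > 0 for all y, and for each u ∈ A let T(·|u) be a pmf on Y and for each u ∈ B let R(·|u) be a pmf on Y. For (μ₁,μ₂) ∈ ℝ² define P^{μ₁,μ₂} : U × Y → ℝ by P^{μ₁,μ₂}(u,y) = (1−μ₁)·P_U^A(u)·((1−μ₂)·W₀(y) + μ₂·T(y|u)) for u ∈ A and P^{μ₁,μ₂}(u,y) = μ₁·P_U^B(u)·R(y|u) for u ∈ B, and let I(μ₁,μ₂) denote the mutual information of P^{μ₁,μ₂}. Then the map μ₂ ↦ I(0, μ₂) has a derivative at μ₂ = 0, equal to 0. -/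
/-!
At `μ₁ = 0` the joint law is `PA u · q_μ(u, y)` on `A`, where `q_μ(u, ·) = (1 - μ) W₀ + μ T(· | u)`
is a pmf for every `μ`. The mutual information then splits over outputs `y` into
`∑ᵤ PA u · q_u log (q_u / q̄)` with `q̄ = ∑ᵤ PA u · q_u`. At `μ = 0` all `q_u(y)` equal `W₀ y > 0`,
so the log-ratio vanishes and the derivative is `∑ᵤ PA u · q_u' - q̄' = 0`.
-/

open Real

noncomputable def mixtureDivergence {ι : Type*} (s : Finset ι) (p q : ι → ℝ) : ℝ :=
  ∑ i ∈ s, p i * (q i * (Real.log (q i) - Real.log (∑ j ∈ s, p j * q j)))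

lemma mutualInfo_ite_mem_mul {U Y : Type*} [Fintype U] [Fintype Y] [DecidableEq U]
    (A : Finset U) (p : U → ℝ) (q : U → Y → ℝ) (hq : ∀ u ∈ A, ∑ y, q u y = 1) :
    mutualInfo (fun u y => if u ∈ A then p u * q u y else 0) =
      ∑ y, mixtureDivergence A p (fun u => q u y) := by
  unfold mutualInfo mixtureDivergence
  rw [Finset.sum_comm]
  refine Finset.sum_congr rfl fun y _ => ?_
  rw [Finset.sum_ite_mem, Finset.univ_inter, ← Finset.sum_subset (Finset.subset_univ A)
    fun u _ hu => by simp [hu]]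
  refine Finset.sum_congr rfl fun u hu => ?_
  have hrow : ∑ y', p u * q u y' = p u := by rw [← Finset.mul_sum, hq u hu, mul_one]
  simp only [if_pos hu, hrow]
  -- `log 0 = 0`: where `p u = 0` or `q u y = 0` both sides vanish
  rcases eq_or_ne (p u) 0 with hp | hp
  · simp [hp]
  rcases eq_or_ne (q u y) 0 with hqy | hqy
  · simp [hqy]
  rw [Real.log_mul hp hqy]
  ring

lemma HasDerivAt.mul_log_sub_log {a b : ℝ → ℝ} {a' b' x : ℝ} (ha : HasDerivAt a a' x)
    (hb : HasDerivAt b b' x) (hab : a x = b x) (hx : a x ≠ 0) :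
    HasDerivAt (fun t => a t * (Real.log (a t) - Real.log (b t))) (a' - b') x := by
  refine (ha.mul ((ha.log hx).sub (hb.log (hab ▸ hx)))).congr_deriv ?_
  simp only [Pi.sub_apply, ← hab, sub_self, mul_zero, zero_add]
  field_simp

lemma hasDerivAt_mixtureDivergence {ι : Type*} (s : Finset ι) (p : ι → ℝ)
    (hp : ∑ i ∈ s, p i = 1) {q : ι → ℝ → ℝ} {q' : ι → ℝ} {x w : ℝ} (hw : w ≠ 0)
    (hq : ∀ i ∈ s, HasDerivAt (q i) (q' i) x) (hqx : ∀ i ∈ s, q i x = w) :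
    HasDerivAt (fun t => mixtureDivergence s p (fun i => q i t)) 0 x := by
  have hmix : HasDerivAt (fun t => ∑ j ∈ s, p j * q j t) (∑ j ∈ s, p j * q' j) x :=
    HasDerivAt.fun_sum fun j hj => (hq j hj).const_mul (p j)
  have hmix_x : ∑ j ∈ s, p j * q j x = w := by
    rw [Finset.sum_congr rfl fun j hj => by rw [hqx j hj], ← Finset.sum_mul, hp, one_mul]
  have hterm := HasDerivAt.fun_sum fun i hi =>
    ((hq i hi).mul_log_sub_log hmix (by rw [hqx i hi, hmix_x])
      (by rw [hqx i hi]; exact hw)).const_mul (p i)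
  refine hterm.congr_deriv ?_
  rw [Finset.sum_congr rfl fun i _ => mul_sub (p i) _ _, Finset.sum_sub_distrib,
    ← Finset.sum_mul, hp, one_mul, sub_self]

theorem stmt_1_general {U Y : Type*} [Fintype U] [Fintype Y] [DecidableEq U]
    (A : Finset U)
    (PA PB : U → ℝ) (W₀ : Y → ℝ) (T R : U → Y → ℝ)
    (hPA1 : ∑ u ∈ A, PA u = 1)
    (hW0pos : ∀ y, 0 < W₀ y) (hW0sum : ∑ y, W₀ y = 1)
    (hT1 : ∀ u ∈ A, ∑ y, T u y = 1)
    (I : ℝ → ℝ → ℝ)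
    (hI : ∀ μ₁ μ₂, I μ₁ μ₂ = mutualInfo (fun (u : U) (y : Y) =>
      if u ∈ A then (1 - μ₁) * PA u * ((1 - μ₂) * W₀ y + μ₂ * T u y)
      else μ₁ * PB u * R u y)) :
    HasDerivAt (fun μ₂ => I 0 μ₂) 0 0 := by
  let q : U → Y → ℝ → ℝ := fun u y μ => (1 - μ) * W₀ y + μ * T u y
  have hrow (μ : ℝ) : ∀ u ∈ A, ∑ y, q u y μ = 1 := fun u hu => by
    simp only [q, Finset.sum_add_distrib, ← Finset.mul_sum, hW0sum, hT1 u hu]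
    ring
  have hq (u : U) (y : Y) : HasDerivAt (q u y) (T u y - W₀ y) 0 := by
    refine ((((hasDerivAt_id (0 : ℝ)).const_sub 1).mul_const (W₀ y)).add
      ((hasDerivAt_id (0 : ℝ)).mul_const (T u y))).congr_deriv ?_
    ring
  have hI0 : (fun μ => I 0 μ) = fun μ => ∑ y, mixtureDivergence A PA (fun u => q u y μ) := by
    funext μ
    rw [hI, ← mutualInfo_ite_mem_mul A PA _ (hrow μ)]
    simp only [sub_zero, one_mul, zero_mul, q]
  rw [hI0]
  simpa using HasDerivAt.fun_sum (u := Finset.univ) fun y _ =>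
    hasDerivAt_mixtureDivergence A PA hPA1 (hW0pos y).ne' (fun u _ => hq u y)
      (fun u _ => by simp [q])

theorem stmt_1 {U Y : Type*} [Fintype U] [Fintype Y] [DecidableEq U]
    (A B : Finset U) (hdisj : Disjoint A B) (hAne : A.Nonempty) (hBne : B.Nonempty)
    (hcover : A ∪ B = Finset.univ)
    (PA PB : U → ℝ) (W₀ : Y → ℝ) (T R : U → Y → ℝ)
    (hPA0 : ∀ u ∈ A, 0 ≤ PA u) (hPA1 : ∑ u ∈ A, PA u = 1)
    (hPB0 : ∀ u ∈ B, 0 ≤ PB u) (hPB1 : ∑ u ∈ B, PB u = 1)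
    (hW0pos : ∀ y, 0 < W₀ y) (hW0sum : ∑ y, W₀ y = 1)
    (hT0 : ∀ u ∈ A, ∀ y, 0 ≤ T u y) (hT1 : ∀ u ∈ A, ∑ y, T u y = 1)
    (hR0 : ∀ u ∈ B, ∀ y, 0 ≤ R u y) (hR1 : ∀ u ∈ B, ∑ y, R u y = 1)
    (I : ℝ → ℝ → ℝ)
    (hI : ∀ μ₁ μ₂, I μ₁ μ₂ = mutualInfo (fun (u : U) (y : Y) =>
      if u ∈ A then (1 - μ₁) * PA u * ((1 - μ₂) * W₀ y + μ₂ * T u y)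
      else μ₁ * PB u * R u y)) :
    HasDerivAt (fun μ₂ => I 0 μ₂) 0 0 :=
  stmt_1_general A PA PB W₀ T R hPA1 hW0pos hW0sum hT1 I hI
end

section
/- Let Z be a finite set, Q₀ a pmf on Z with Q₀(z) > 0 for all z, and P a pmf on Z. Define g : ℝ → ℝ by g(t) = D((1−t)·Q₀ + t·P ‖ Q₀) = ∑_{z∈Z} ((1−t)·Q₀(z) + t·P(z))·(Real.log((1−t)·Q₀(z) + t·P(z)) − Real.log(Q₀(z))). Then g has a derivative at t = 0 equal to 0, and the second derivative of g at t = 0 (i.e., deriv (deriv g) at 0) equals χ²(P ‖ Q₀). -/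
open Real

/-- χ²-distance of finite-alphabet "distributions" `p`, `q`. -/
noncomputable def chiSq {Z : Type*} [Fintype Z] (p q : Z → ℝ) : ℝ :=
  ∑ z, (p z - q z) ^ 2 / q z

/-!
Write `u_z(t) = (1 - t) Q₀ z + t P z`, so that `g = ∑ z, u_z (log u_z - log Q₀ z)` and `u_z' = P z - Q₀ z`.
Near `t = 0` every `u_z(t)` is positive, and there `g'(t) = ∑ z, (P z - Q₀ z) (log u_z(t) - log Q₀ z + 1)`.
At `t = 0` the logarithms cancel, leaving `∑ z, (P z - Q₀ z) = 1 - 1 = 0`. Differentiating once more gives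
`g''(0) = ∑ z, (P z - Q₀ z)² / u_z(0) = χ²(P ‖ Q₀)`.
-/

open Filter Topology

lemma deriv_deriv_eq_of_eventually_hasDerivAt {𝕜 F : Type*} [NontriviallyNormedField 𝕜]
    [NormedAddCommGroup F] [NormedSpace 𝕜 F] {f f' : 𝕜 → F} {x : 𝕜} {f'' : F}
    (hf : ∀ᶠ t in 𝓝 x, HasDerivAt f (f' t) t) (hf' : HasDerivAt f' f'' x) :
    deriv (deriv f) x = f'' :=
  (EventuallyEq.deriv_eq (hf.mono fun _ ht => ht.deriv)).trans hf'.deriv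

lemma hasDerivAt_one_sub_mul_add_mul (a p t : ℝ) :
    HasDerivAt (fun s => (1 - s) * a + s * p) (p - a) t :=
  (((hasDerivAt_id' t).const_sub 1).mul_const a |>.fun_add ((hasDerivAt_id' t).mul_const p))
    |>.congr_deriv (by ring)

lemma eventually_forall_one_sub_mul_add_mul_pos {Z : Type*} [Finite Z] {Q : Z → ℝ} (P : Z → ℝ)
    (hQ : ∀ z, 0 < Q z) : ∀ᶠ t in 𝓝 (0 : ℝ), ∀ z, 0 < (1 - t) * Q z + t * P z :=
  eventually_all.2 fun z =>
    (hasDerivAt_one_sub_mul_add_mul (Q z) (P z) 0).continuousAt.eventually (lt_mem_nhds (by simpa using hQ z))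

lemma hasDerivAt_mul_log_sub_log {u : ℝ → ℝ} {u' t : ℝ} (a : ℝ) (hu : HasDerivAt u u' t)
    (ht : u t ≠ 0) :
    HasDerivAt (fun s => u s * (log (u s) - log a)) (u' * (log (u t) - log a + 1)) t :=
  (hu.fun_mul ((hu.log ht).sub_const (log a))).congr_deriv (by field_simp)

theorem stmt_4_general {Z : Type*} [Fintype Z]
    (Q₀ P : Z → ℝ)
    (hQ0pos : ∀ z, 0 < Q₀ z) (hQ0sum : ∑ z, Q₀ z = 1)
    (hPsum : ∑ z, P z = 1)
    (g : ℝ → ℝ)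
    (hg : ∀ t, g t = ∑ z, ((1 - t) * Q₀ z + t * P z) *
      (Real.log ((1 - t) * Q₀ z + t * P z) - Real.log (Q₀ z))) :
    HasDerivAt g 0 0 ∧ deriv (deriv g) 0 = chiSq P Q₀ := by
  obtain rfl : g = _ := funext hg
  have hg' : ∀ᶠ t in 𝓝 (0 : ℝ), HasDerivAt _
      (∑ z, (P z - Q₀ z) * (log ((1 - t) * Q₀ z + t * P z) - log (Q₀ z) + 1)) t :=
    (eventually_forall_one_sub_mul_add_mul_pos P hQ0pos).mono fun t ht =>
      HasDerivAt.fun_sum fun z _ =>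
        hasDerivAt_mul_log_sub_log _ (hasDerivAt_one_sub_mul_add_mul _ _ t) (ht z).ne'
  constructor
  · convert hg'.self_of_nhds using 1
    simp [Finset.sum_sub_distrib, hPsum, hQ0sum]
  · refine deriv_deriv_eq_of_eventually_hasDerivAt hg' ?_
    convert HasDerivAt.fun_sum fun z _ =>
      (((hasDerivAt_one_sub_mul_add_mul (Q₀ z) (P z) 0).log (by simpa using (hQ0pos z).ne')).sub_const
        (log (Q₀ z)) |>.add_const 1).const_mul (P z - Q₀ z) using 1
    simp [chiSq, pow_two, mul_div_assoc]

theorem stmt_4 {Z : Type*} [Fintype Z]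
    (Q₀ P : Z → ℝ)
    (hQ0pos : ∀ z, 0 < Q₀ z) (hQ0sum : ∑ z, Q₀ z = 1)
    (hP0 : ∀ z, 0 ≤ P z) (hPsum : ∑ z, P z = 1)
    (g : ℝ → ℝ)
    (hg : ∀ t, g t = ∑ z, ((1 - t) * Q₀ z + t * P z) *
      (Real.log ((1 - t) * Q₀ z + t * P z) - Real.log (Q₀ z))) :
    HasDerivAt g 0 0 ∧ deriv (deriv g) 0 = chiSq P Q₀ :=
  stmt_4_general Q₀ P hQ0pos hQ0sum hPsum g hg
end

section
/- Let Z be a finite set, Q₀ a pmf on Z with Q₀(z) > 0 for all z, and let P̃ᴬ and Pᴮ be pmfs on Z. For (μ₁,μ₂) ∈ ℝ² define f(μ₁,μ₂) = D((1−μ₁)(1−μ₂)·Q₀ + (1−μ₁)·μ₂·P̃ᴬ + μ₁·Pᴮ ‖ Q₀), where the divergence is the finite sum ∑_z p(z)·(Real.log(p(z)) − Real.log(Q₀(z))) applied to p = (1−μ₁)(1−μ₂)·Q₀ + (1−μ₁)·μ₂·P̃ᴬ + μ₁·Pᴮ. Then the mixed second partial derivative of f at the origin, namely deriv (fun μ₂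 => deriv (fun μ₁ => f(μ₁,μ₂)) 0) at μ₂ = 0, equals ∑_{z∈Z} (P̃ᴬ(z) − Q₀(z))·(Pᴮ(z) − Q₀(z))/Q₀(z). -/
open Real Filter Topology

/-
Both partial derivatives are taken along segments: in μ₁ from the mixture
r(μ₂) = (1 - μ₂) Q₀ + μ₂ P̃ᴬ towards Pᴮ, in μ₂ from Q₀ towards P̃ᴬ. Differentiating
x ↦ x (log x - log Q₀) along the first segment gives ∑ (Pᴮ - r(μ₂)) (log r(μ₂) - log Q₀ + 1),
valid while r(μ₂) has no zero, hence near μ₂ = 0. Differentiating this at μ₂ = 0, where the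
logarithmic factor equals 1, gives ∑ (Q₀ - P̃ᴬ) + ∑ (P̃ᴬ - Q₀)(Pᴮ - Q₀)/Q₀, and the first sum
vanishes because Q₀ and P̃ᴬ both have total mass 1.
-/

lemma hasDerivAt_segment (x y t : ℝ) : HasDerivAt (fun t => (1 - t) * x + t * y) (y - x) t :=
  ((((hasDerivAt_id' t).const_sub 1).mul_const x).fun_add
    ((hasDerivAt_id' t).mul_const y)).congr_deriv (by ring)

lemma hasDerivAt_mul_log_sub_log_s5 (c : ℝ) {x : ℝ} (hx : x ≠ 0) :
    HasDerivAt (fun x => x * (log x - log c)) (log x - log c + 1) x :=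
  ((hasDerivAt_id' x).fun_mul ((hasDerivAt_log hx).sub_const (log c))).congr_deriv
    (by field_simp)

lemma hasDerivAt_segment_mul_log_sub_log (c : ℝ) {x : ℝ} (y : ℝ) (hx : x ≠ 0) :
    HasDerivAt (fun t => ((1 - t) * x + t * y) * (log ((1 - t) * x + t * y) - log c))
      ((y - x) * (log x - log c + 1)) 0 := by
  have hstart : (1 - 0) * x + 0 * y = x := by ring
  have hlog := hasDerivAt_mul_log_sub_log_s5 c (x := (1 - 0) * x + 0 * y) (by rwa [hstart])
  exact (hlog.comp (0 : ℝ) (hasDerivAt_segment x y 0)).congr_deriv (by rw [hstart, mul_comm])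

lemma hasDerivAt_sub_segment_mul_log_add_one {x : ℝ} (a y : ℝ) (hx : x ≠ 0) :
    HasDerivAt (fun t => (y - ((1 - t) * x + t * a)) * (log ((1 - t) * x + t * a) - log x + 1))
      ((x - a) + (a - x) * (y - x) / x) 0 := by
  have hstart : (1 - 0) * x + 0 * a = x := by ring
  have hseg := hasDerivAt_segment x a 0
  have hlog := ((hseg.log (by rwa [hstart])).sub_const (log x)).add_const 1
  refine ((hseg.const_sub y).fun_mul hlog).congr_deriv ?_
  rw [hstart, sub_self]
  ring

theorem stmt_5_general {Z : Type*} [Fintype Z]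
    (Q₀ PtA PB : Z → ℝ)
    (hQ0pos : ∀ z, 0 < Q₀ z) (hQ0sum : ∑ z, Q₀ z = 1)
    (hPtA1 : ∑ z, PtA z = 1)
    (f : ℝ → ℝ → ℝ)
    (hf : ∀ μ₁ μ₂, f μ₁ μ₂ = ∑ z,
      ((1 - μ₁) * (1 - μ₂) * Q₀ z + (1 - μ₁) * μ₂ * PtA z + μ₁ * PB z) *
        (Real.log ((1 - μ₁) * (1 - μ₂) * Q₀ z + (1 - μ₁) * μ₂ * PtA z + μ₁ * PB z)
          - Real.log (Q₀ z))) :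
    deriv (fun μ₂ => deriv (fun μ₁ => f μ₁ μ₂) 0) 0
      = ∑ z, (PtA z - Q₀ z) * (PB z - Q₀ z) / Q₀ z := by
  set r : ℝ → Z → ℝ := fun μ₂ z => (1 - μ₂) * Q₀ z + μ₂ * PtA z
  have hr_ne : ∀ᶠ μ₂ in 𝓝 0, ∀ z, r μ₂ z ≠ 0 := by
    refine eventually_all.2 fun z => ContinuousAt.eventually_ne (by fun_prop) ?_
    simpa [r] using (hQ0pos z).ne'
  have hinner : (fun μ₂ => deriv (fun μ₁ => f μ₁ μ₂) 0) =ᶠ[𝓝 0]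
      fun μ₂ => ∑ z, (PB z - r μ₂ z) * (log (r μ₂ z) - log (Q₀ z) + 1) := by
    filter_upwards [hr_ne] with μ₂ hμ₂
    have hsegment : (fun μ₁ => f μ₁ μ₂) = fun μ₁ => ∑ z,
        ((1 - μ₁) * r μ₂ z + μ₁ * PB z) * (log ((1 - μ₁) * r μ₂ z + μ₁ * PB z) - log (Q₀ z)) := by
      ext μ₁
      rw [hf]
      refine Finset.sum_congr rfl fun z _ => ?_
      rw [show (1 - μ₁) * (1 - μ₂) * Q₀ z + (1 - μ₁) * μ₂ * PtA z + μ₁ * PB z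
        = (1 - μ₁) * r μ₂ z + μ₁ * PB z by ring]
    rw [hsegment, (HasDerivAt.fun_sum fun z _ =>
      hasDerivAt_segment_mul_log_sub_log (Q₀ z) (PB z) (hμ₂ z)).deriv]
  rw [hinner.deriv_eq, (HasDerivAt.fun_sum fun z _ =>
    hasDerivAt_sub_segment_mul_log_add_one (PtA z) (PB z) (hQ0pos z).ne').deriv,
    Finset.sum_add_distrib, Finset.sum_sub_distrib, hQ0sum, hPtA1, sub_self, zero_add]

theorem stmt_5 {Z : Type*} [Fintype Z]
    (Q₀ PtA PB : Z → ℝ)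
    (hQ0pos : ∀ z, 0 < Q₀ z) (hQ0sum : ∑ z, Q₀ z = 1)
    (hPtA0 : ∀ z, 0 ≤ PtA z) (hPtA1 : ∑ z, PtA z = 1)
    (hPB0 : ∀ z, 0 ≤ PB z) (hPB1 : ∑ z, PB z = 1)
    (f : ℝ → ℝ → ℝ)
    (hf : ∀ μ₁ μ₂, f μ₁ μ₂ = ∑ z,
      ((1 - μ₁) * (1 - μ₂) * Q₀ z + (1 - μ₁) * μ₂ * PtA z + μ₁ * PB z) *
        (Real.log ((1 - μ₁) * (1 - μ₂) * Q₀ z + (1 - μ₁) * μ₂ * PtA z + μ₁ * PB z)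
          - Real.log (Q₀ z))) :
    deriv (fun μ₂ => deriv (fun μ₁ => f μ₁ μ₂) 0) 0
      = ∑ z, (PtA z - Q₀ z) * (PB z - Q₀ z) / Q₀ z :=
  stmt_5_general Q₀ PtA PB hQ0pos hQ0sum hPtA1 f hf
end

section
/- Let X be a finite set with a distinguished element x₀, Y a finite set, and W a channel assigning to each x ∈ X a pmf W(·|x) on Y with W(y|x₀) > 0 for all y. Let A and B be disjoint nonempty finite sets with U = A ∪ B, P_U^A a pmf on A, P_U^B a pmf on B; for each u ∈ A let P̃_{X|U}(·|u) be a pmf on X with P̃_{X|U}(x₀|u) = 0, and for each u ∈ B let P_{X|U}(·|u) be a pmf on X. For (μ₁,μ₂) ∈ ℝ² define Q^{μ₁,μ₂} : U × X → ℝ by Q^{μ₁,μ₂}(u,x) = (1−μ₁)·P_U^A(u)·((1−μ₂)·1{x=x₀} + μ₂·P̃_{X|U}(x|u)) for u ∈ A and Q^{μ₁,μ₂}(u,x) = μ₁·P_U^B(u)·P_{X|U}(x|u) for u ∈ B, with U-marginal Q_U(u) = ∑_x Q^{μ₁,μ₂}(u,x). Define the conditional mutual information J(μ₁,μ₂) =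 ∑_{u,x,y} Q^{μ₁,μ₂}(u,x)·W(y|x)·(Real.log(W(y|x)) + Real.log(Q_U(u)) − Real.log(∑_{x'} Q^{μ₁,μ₂}(u,x')·W(y|x'))). Set Pᴮ_X(x) = ∑_{u∈B} P_U^B(u)·P_{X|U}(x|u) and P^B_{Y|U}(y|u) = ∑_x P_{X|U}(x|u)·W(y|x) for u ∈ B. Then the map μ₁ ↦ J(μ₁, 0) has a derivative at μ₁ = 0, equal to ∑_{x∈X} Pᴮ_X(x)·D(W(·|x) ‖ W(·|x₀)) − ∑_{u∈B} P_U^B(u)·D(P^B_{Y|U}(·|u) ‖ W(·|x₀)). -/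
open Real

theorem stmt_6 {U X Y : Type*} [Fintype U] [Fintype X] [Fintype Y]
    [DecidableEq U] [DecidableEq X]
    (x₀ : X) (W : X → Y → ℝ)
    (hW0 : ∀ x y, 0 ≤ W x y) (hW1 : ∀ x, ∑ y, W x y = 1) (hWpos : ∀ y, 0 < W x₀ y)
    (A B : Finset U) (hdisj : Disjoint A B) (hAne : A.Nonempty) (hBne : B.Nonempty)
    (hcover : A ∪ B = Finset.univ)
    (PUA PUB : U → ℝ)
    (hPUA0 : ∀ u ∈ A, 0 ≤ PUA u) (hPUA1 : ∑ u ∈ A, PUA u = 1)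
    (hPUB0 : ∀ u ∈ B, 0 ≤ PUB u) (hPUB1 : ∑ u ∈ B, PUB u = 1)
    (PtXU PXU : U → X → ℝ)
    (hPt0 : ∀ u ∈ A, ∀ x, 0 ≤ PtXU u x) (hPt1 : ∀ u ∈ A, ∑ x, PtXU u x = 1)
    (hPtx0 : ∀ u ∈ A, PtXU u x₀ = 0)
    (hP0 : ∀ u ∈ B, ∀ x, 0 ≤ PXU u x) (hP1 : ∀ u ∈ B, ∑ x, PXU u x = 1)
    (Q : ℝ → ℝ → U → X → ℝ)
    (hQ : ∀ μ₁ μ₂ u x, Q μ₁ μ₂ u x =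
      if u ∈ A then
        (1 - μ₁) * PUA u * ((1 - μ₂) * (if x = x₀ then 1 else 0) + μ₂ * PtXU u x)
      else μ₁ * PUB u * PXU u x)
    (J : ℝ → ℝ → ℝ)
    (hJ : ∀ μ₁ μ₂, J μ₁ μ₂ = ∑ u, ∑ x, ∑ y, Q μ₁ μ₂ u x * W x y *
      (Real.log (W x y) + Real.log (∑ x', Q μ₁ μ₂ u x')
        - Real.log (∑ x', Q μ₁ μ₂ u x' * W x' y))) :
    HasDerivAt (fun μ₁ => J μ₁ 0)
      ((∑ x, (∑ u ∈ B, PUB u * PXU u x) * klDiv (W x) (W x₀))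
        - ∑ u ∈ B, PUB u * klDiv (fun y => ∑ x, PXU u x * W x y) (W x₀)) 0 := by
  set D : ℝ := (∑ x, (∑ u ∈ B, PUB u * PXU u x) * klDiv (W x) (W x₀))
        - ∑ u ∈ B, PUB u * klDiv (fun y => ∑ x, PXU u x * W x y) (W x₀) with hD
  set E : ℝ := ∑ u ∈ B, ∑ x, ∑ y,
      PUB u * (PXU u x * (W x y * (Real.log (W x y) - Real.log (∑ x', PXU u x' * W x' y))))
    with hE
  have hDE : E = D := by
    rw [hE, hD]
    simp only [klDiv]
    have h1 : ∑ x, (∑ u ∈ B, PUB u * PXU u x) *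
        (∑ y, W x y * (Real.log (W x y) - Real.log (W x₀ y)))
        = ∑ u ∈ B, ∑ x, ∑ y,
          PUB u * (PXU u x * (W x y * (Real.log (W x y) - Real.log (W x₀ y)))) := by
      rw [Finset.sum_comm]
      refine Finset.sum_congr rfl fun x _ => ?_
      rw [Finset.sum_mul]
      refine Finset.sum_congr rfl fun u _ => ?_
      rw [Finset.mul_sum]
      exact Finset.sum_congr rfl fun y _ => by ring
    have h2 : ∑ u ∈ B, PUB u * ∑ y, (∑ x, PXU u x * W x y) *
        (Real.log (∑ x, PXU u x * W x y) - Real.log (W x₀ y))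
        = ∑ u ∈ B, ∑ x, ∑ y,
          PUB u * (PXU u x * (W x y *
            (Real.log (∑ x', PXU u x' * W x' y) - Real.log (W x₀ y)))) := by
      refine Finset.sum_congr rfl fun u _ => ?_
      rw [Finset.mul_sum, Finset.sum_comm]
      refine Finset.sum_congr rfl fun y _ => ?_
      rw [Finset.sum_mul, Finset.mul_sum]
      exact Finset.sum_congr rfl fun x _ => by ring
    rw [h1, h2, ← Finset.sum_sub_distrib]
    refine Finset.sum_congr rfl fun u _ => ?_
    rw [← Finset.sum_sub_distrib]
    refine Finset.sum_congr rfl fun x _ => ?_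
    rw [← Finset.sum_sub_distrib]
    refine Finset.sum_congr rfl fun y _ => ?_
    ring
  have hlin : ∀ μ₁ : ℝ, J μ₁ 0 = μ₁ * D := by
    intro μ₁
    rw [hJ, show (Finset.univ : Finset U) = A ∪ B from hcover.symm,
      Finset.sum_union hdisj]
    have hA0 : ∑ u ∈ A, ∑ x, ∑ y, Q μ₁ 0 u x * W x y *
        (Real.log (W x y) + Real.log (∑ x', Q μ₁ 0 u x')
          - Real.log (∑ x', Q μ₁ 0 u x' * W x' y)) = 0 := by
      refine Finset.sum_eq_zero fun u hu => ?_
      have hQA : ∀ x, Q μ₁ 0 u x = (1 - μ₁) * PUA u * (if x = x₀ then 1 else 0) := by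
        intro x; rw [hQ]; simp [hu]
      have hm : (∑ x', Q μ₁ 0 u x') = (1 - μ₁) * PUA u := by
        simp [hQA, mul_ite, mul_one, mul_zero]
      have hs : ∀ y, (∑ x', Q μ₁ 0 u x' * W x' y) = (1 - μ₁) * PUA u * W x₀ y := by
        intro y; simp [hQA, mul_ite, ite_mul, mul_one, mul_zero, zero_mul]
      simp only [hm, hs]
      simp only [hQA]
      refine Finset.sum_eq_zero fun x _ => ?_
      refine Finset.sum_eq_zero fun y _ => ?_
      rcases eq_or_ne x x₀ with hx | hx
      · subst hx
        rcases eq_or_ne ((1 - μ₁) * PUA u) 0 with h | h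
        · simp [h]
        · rw [if_pos rfl, Real.log_mul h (hWpos y).ne']
          ring
      · simp [hx]
    have hB : ∑ u ∈ B, ∑ x, ∑ y, Q μ₁ 0 u x * W x y *
        (Real.log (W x y) + Real.log (∑ x', Q μ₁ 0 u x')
          - Real.log (∑ x', Q μ₁ 0 u x' * W x' y)) = μ₁ * E := by
      rw [hE, Finset.mul_sum]
      refine Finset.sum_congr rfl fun u hu => ?_
      have hu' : u ∉ A := fun h => Finset.disjoint_left.mp hdisj h hu
      have hQB : ∀ x, Q μ₁ 0 u x = μ₁ * PUB u * PXU u x := by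
        intro x; rw [hQ]; simp [hu']
      have hm : (∑ x', Q μ₁ 0 u x') = μ₁ * PUB u := by
        simp only [hQB, ← Finset.mul_sum, hP1 u hu, mul_one]
      have hs : ∀ y, (∑ x', Q μ₁ 0 u x' * W x' y)
          = μ₁ * PUB u * (∑ x', PXU u x' * W x' y) := by
        intro y
        rw [Finset.mul_sum]
        exact Finset.sum_congr rfl fun x _ => by rw [hQB]; ring
      simp only [hm, hs]
      simp only [hQB]
      rw [Finset.mul_sum]
      refine Finset.sum_congr rfl fun x _ => ?_
      rw [Finset.mul_sum]
      refine Finset.sum_congr rfl fun y _ => ?_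
      rcases eq_or_ne μ₁ 0 with h | h
      · simp [h]
      rcases eq_or_ne (PUB u) 0 with h2 | h2
      · simp [h2]
      rcases eq_or_ne (PXU u x * W x y) 0 with h3 | h3
      · rcases mul_eq_zero.mp h3 with h3 | h3 <;> simp [h3]
      · have hpos : 0 < ∑ x', PXU u x' * W x' y := by
          have hle : PXU u x * W x y ≤ ∑ x', PXU u x' * W x' y :=
            Finset.single_le_sum (fun x' _ => mul_nonneg (hP0 u hu x') (hW0 x' y))
              (Finset.mem_univ x)
          exact lt_of_lt_of_le
            (lt_of_le_of_ne (mul_nonneg (hP0 u hu x) (hW0 x y)) (Ne.symm h3)) hle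
        rw [Real.log_mul (mul_ne_zero h h2) hpos.ne']
        ring
    rw [hA0, hB, zero_add, hDE]
  have hfun : (fun μ₁ => J μ₁ 0) = fun μ₁ => μ₁ * D := funext hlin
  rw [hfun]
  simpa using (hasDerivAt_id (0 : ℝ)).mul_const D
end

section
/- Let U, X, Y be finite sets with a distinguished element x₀ ∈ X. For each x ∈ X let P_{U|X}(·|x) be a pmf on U, let P̃ be a pmf on X with P̃(x₀) = 0, and let W assign to each x a pmf W(·|x) on Y with W(y|x₀) > 0 for all y. For μ ∈ ℝ define P^μ : U × Y → ℝ by P^μ(u,y) = (1−μ)·P_{U|X}(u|x₀)·W(y|x₀) + μ·∑_{x∈X} P_{U|X}(u|x)·P̃(x)·W(y|x), and set c(u,y) = ∑_{x∈X} P_{U|X}(u|x)·P̃(x)·W(y|x) − P_{U|X}(u|x₀)·W(y|x₀). Then for every μ₀ ∈ (0,1) such that P^{μ₀}(u,y) > 0 for all (u,y), the map μ ↦ I(P^μ) has a derivative at μ₀, equal to ∑_{(u,y)} c(u,y)·(Real.log(P^{μ₀}(u,y)) − Real.log(P_U^{μ₀}(u)) − Real.log(P_Y^{μ₀}(y))),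 where P_U^{μ₀}(u) = ∑_y P^{μ₀}(u,y) and P_Y^{μ₀}(y) = ∑_u P^{μ₀}(u,y). -/
open Real

/-!
Write `I(P) = ∑ P log P - ∑ P_U log P_U - ∑ P_Y log P_Y`. Since `(t log t)' = log t + 1` and the
velocity `c` of `P^μ` has marginals `c_U`, `c_Y`, the derivative is
`∑ c log P - ∑ c_U log P_U - ∑ c_Y log P_Y` plus `∑ c - ∑ c_U - ∑ c_Y = -∑ c`, and this last term
vanishes because `P^μ` has total mass `1` for every `μ`.
-/

theorem HasDerivAt.mul_log {f : ℝ → ℝ} {f' x : ℝ} (hf : HasDerivAt f f' x) (hx : f x ≠ 0) :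
    HasDerivAt (fun t => f t * Real.log (f t)) (f' * Real.log (f x) + f') x := by
  have h := (Real.hasDerivAt_mul_log hx).comp x hf
  rwa [add_one_mul, mul_comm] at h

section MutualInfo

variable {U Y : Type*} [Fintype U] [Fintype Y]

theorem sum_sum_mul_sub_log_marginals (Q P : U → Y → ℝ) :
    ∑ u, ∑ y, Q u y * (log (P u y) - log (∑ y', P u y') - log (∑ u', P u' y))
      = ∑ u, ∑ y, Q u y * log (P u y) - ∑ u, (∑ y, Q u y) * log (∑ y, P u y)
        - ∑ y, (∑ u, Q u y) * log (∑ u, P u y) := by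
  simp only [mul_sub, Finset.sum_sub_distrib, Finset.sum_mul]
  rw [Finset.sum_comm (f := fun u y => Q u y * log (∑ u', P u' y))]

theorem hasDerivAt_mutualInfo {P : ℝ → U → Y → ℝ} {c : U → Y → ℝ} {μ₀ : ℝ}
    (hP : ∀ u y, HasDerivAt (fun μ => P μ u y) (c u y) μ₀) (hpos : ∀ u y, 0 < P μ₀ u y)
    (hc : ∑ u, ∑ y, c u y = 0) :
    HasDerivAt (fun μ => mutualInfo (P μ))
      (∑ u, ∑ y, c u y * (log (P μ₀ u y) - log (∑ y', P μ₀ u y')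
        - log (∑ u', P μ₀ u' y))) μ₀ := by
  rcases isEmpty_or_nonempty U with hU | hU
  · simpa [mutualInfo] using hasDerivAt_const μ₀ (0 : ℝ)
  rcases isEmpty_or_nonempty Y with hY | hY
  · simpa [mutualInfo] using hasDerivAt_const μ₀ (0 : ℝ)
  have hPU : ∀ u, HasDerivAt (fun μ => ∑ y, P μ u y) (∑ y, c u y) μ₀ :=
    fun u => .fun_sum fun y _ => hP u y
  have hPY : ∀ y, HasDerivAt (fun μ => ∑ u, P μ u y) (∑ u, c u y) μ₀ :=
    fun y => .fun_sum fun u _ => hP u y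
  have hjoint : HasDerivAt (fun μ => ∑ u, ∑ y, P μ u y * log (P μ u y))
      (∑ u, ∑ y, (c u y * log (P μ₀ u y) + c u y)) μ₀ :=
    .fun_sum fun u _ => .fun_sum fun y _ => (hP u y).mul_log (hpos u y).ne'
  have hmargU : HasDerivAt (fun μ => ∑ u, (∑ y, P μ u y) * log (∑ y, P μ u y))
      (∑ u, ((∑ y, c u y) * log (∑ y, P μ₀ u y) + ∑ y, c u y)) μ₀ :=
    .fun_sum fun u _ => (hPU u).mul_log
      (Finset.sum_pos (fun y _ => hpos u y) Finset.univ_nonempty).ne'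
  have hmargY : HasDerivAt (fun μ => ∑ y, (∑ u, P μ u y) * log (∑ u, P μ u y))
      (∑ y, ((∑ u, c u y) * log (∑ u, P μ₀ u y) + ∑ u, c u y)) μ₀ :=
    .fun_sum fun y _ => (hPY y).mul_log
      (Finset.sum_pos (fun u _ => hpos u y) Finset.univ_nonempty).ne'
  unfold mutualInfo
  simp only [sum_sum_mul_sub_log_marginals]
  refine ((hjoint.sub hmargU).sub hmargY).congr_deriv ?_
  simp only [Finset.sum_add_distrib]
  rw [Finset.sum_comm (f := fun u y => c u y)] at hc ⊢
  linarith

end MutualInfo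

theorem sum_sum_sum_mul_mul_eq_one {U X Y : Type*} [Fintype U] [Fintype X] [Fintype Y]
    {p : X → U → ℝ} {q : X → ℝ} {w : X → Y → ℝ} (hp : ∀ x, ∑ u, p x u = 1)
    (hq : ∑ x, q x = 1) (hw : ∀ x, ∑ y, w x y = 1) :
    ∑ u, ∑ y, ∑ x, p x u * q x * w x y = 1 := by
  simp only [Finset.sum_comm (γ := Y), ← Finset.mul_sum, hw, mul_one]
  rw [Finset.sum_comm]
  simp only [← Finset.sum_mul, hp, one_mul, hq]

theorem stmt_8_general {U X Y : Type*} [Fintype U] [Fintype X] [Fintype Y]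
    (x₀ : X)
    (PUX : X → U → ℝ)  -- `PUX x u` is the conditional pmf P_{U|X}(u|x)
    (hPUX1 : ∀ x, ∑ u, PUX x u = 1)
    (Pt : X → ℝ) (hPt1 : ∑ x, Pt x = 1)
    (W : X → Y → ℝ) (hW1 : ∀ x, ∑ y, W x y = 1)
    (P : ℝ → U → Y → ℝ)
    (hP : ∀ μ u y, P μ u y
      = (1 - μ) * PUX x₀ u * W x₀ y + μ * ∑ x, PUX x u * Pt x * W x y)
    (c : U → Y → ℝ)
    (hc : ∀ u y, c u y = (∑ x, PUX x u * Pt x * W x y) - PUX x₀ u * W x₀ y)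
    (μ₀ : ℝ)
    (hpos : ∀ u y, 0 < P μ₀ u y) :
    HasDerivAt (fun μ => mutualInfo (P μ))
      (∑ u, ∑ y, c u y * (Real.log (P μ₀ u y) - Real.log (∑ y', P μ₀ u y')
        - Real.log (∑ u', P μ₀ u' y))) μ₀ := by
  have hderiv : ∀ u y, HasDerivAt (fun μ => P μ u y) (c u y) μ₀ := by
    intro u y
    have h_affine : (fun μ => P μ u y) = fun μ => PUX x₀ u * W x₀ y + μ * c u y := by
      funext μ
      rw [hP, hc]
      ring
    rw [h_affine]
    simpa using ((hasDerivAt_id μ₀).mul_const (c u y)).const_add (PUX x₀ u * W x₀ y)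
  have hmass : ∑ u, ∑ y, c u y = 0 := by
    have hx₀ : ∑ u, ∑ y, PUX x₀ u * W x₀ y = 1 := by
      rw [← Finset.sum_mul_sum, hPUX1, hW1, one_mul]
    simp only [hc, Finset.sum_sub_distrib, sum_sum_sum_mul_mul_eq_one hPUX1 hPt1 hW1, hx₀,
      sub_self]
  exact hasDerivAt_mutualInfo hderiv hpos hmass

theorem stmt_8 {U X Y : Type*} [Fintype U] [Fintype X] [Fintype Y]
    (x₀ : X)
    (PUX : X → U → ℝ)  -- `PUX x u` is the conditional pmf P_{U|X}(u|x)
    (hPUX0 : ∀ x u, 0 ≤ PUX x u) (hPUX1 : ∀ x, ∑ u, PUX x u = 1)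
    (Pt : X → ℝ) (hPt0 : ∀ x, 0 ≤ Pt x) (hPt1 : ∑ x, Pt x = 1) (hPtx0 : Pt x₀ = 0)
    (W : X → Y → ℝ) (hW0 : ∀ x y, 0 ≤ W x y) (hW1 : ∀ x, ∑ y, W x y = 1)
    (hWpos : ∀ y, 0 < W x₀ y)
    (P : ℝ → U → Y → ℝ)
    (hP : ∀ μ u y, P μ u y
      = (1 - μ) * PUX x₀ u * W x₀ y + μ * ∑ x, PUX x u * Pt x * W x y)
    (c : U → Y → ℝ)
    (hc : ∀ u y, c u y = (∑ x, PUX x u * Pt x * W x y) - PUX x₀ u * W x₀ y)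
    (μ₀ : ℝ) (hμ₀ : μ₀ ∈ Set.Ioo (0 : ℝ) 1)
    (hpos : ∀ u y, 0 < P μ₀ u y) :
    HasDerivAt (fun μ => mutualInfo (P μ))
      (∑ u, ∑ y, c u y * (Real.log (P μ₀ u y) - Real.log (∑ y', P μ₀ u y')
        - Real.log (∑ u', P μ₀ u' y))) μ₀ :=
  stmt_8_general x₀ PUX hPUX1 Pt hPt1 W hW1 P hP c hc μ₀ hpos
end

section
/- Let U, X, Y be finite sets with a distinguished element x₀ ∈ X, and let W assign to each x ∈ X a pmf W(·|x) on Y with W(y|x₀) > 0 for all y. Let P : ℝ → (U × X → ℝ) be a family such that P(μ) is a pmf on U × X for every μ in some neighborhood of 0, for every (u,x) the map μ ↦ P(μ)(u,x) has a derivative at μ = 0, and P(0)(u,x) = q(u)·1{x = x₀} for a pmf q on U with q(u) > 0 for all u ∈ U. Let I(μ) denote the mutual information of the joint function on U × Y given by (u,y) ↦ ∑_{x∈X} P(μ)(u,x)·W(y|x). Then the map μ ↦ I(μ) has a derivative at μ = 0, equal to 0. -/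
open Real

/-!
At a product distribution `q ⊗ w` with positive marginals, the first-order variation of
`I = ∑ f (log f - log f_U - log f_Y)` in a direction `D` is `∑ D · log (f / (f_U f_Y))`, which
vanishes because `f = f_U f_Y` there, plus `∑ D - ∑ D - ∑ D = -∑ D` from differentiating the
logarithms. The output law `μ ↦ ∑ₓ P(μ)(u,x) W(y|x)` is exactly such a product at `μ = 0`,
and its total mass is constant, so `∑ D = 0`.
-/

open Finset Filter Topology

theorem HasDerivAt.mul_log_sub_log_sub_log {f g h : ℝ → ℝ} {f' g' h' a b μ₀ : ℝ}
    (hf : HasDerivAt f f' μ₀) (hg : HasDerivAt g g' μ₀) (hh : HasDerivAt h h' μ₀)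
    (ha : a ≠ 0) (hb : b ≠ 0) (hf₀ : f μ₀ = a * b) (hg₀ : g μ₀ = a) (hh₀ : h μ₀ = b) :
    HasDerivAt (fun μ => f μ * (Real.log (f μ) - Real.log (g μ) - Real.log (h μ)))
      (f' - b * g' - a * h') μ₀ := by
  have hlf := hf.log (by rw [hf₀]; exact mul_ne_zero ha hb)
  have hlg := hg.log (by rw [hg₀]; exact ha)
  have hlh := hh.log (by rw [hh₀]; exact hb)
  refine (hf.fun_mul ((hlf.fun_sub hlg).fun_sub hlh)).congr_deriv ?_
  rw [hf₀, hg₀, hh₀, log_mul ha hb]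
  field_simp
  ring

section MutualInfo

variable {U Y : Type*} [Fintype U] [Fintype Y]

theorem hasDerivAt_mutualInfo_of_eq_mul {f : ℝ → U → Y → ℝ} {D : U → Y → ℝ} {μ₀ : ℝ}
    {a : U → ℝ} {b : Y → ℝ} (hf : ∀ u y, HasDerivAt (fun μ => f μ u y) (D u y) μ₀)
    (ha : ∀ u, a u ≠ 0) (hb : ∀ y, b y ≠ 0) (ha1 : ∑ u, a u = 1) (hb1 : ∑ y, b y = 1)
    (hf₀ : ∀ u y, f μ₀ u y = a u * b y) :
    HasDerivAt (fun μ => mutualInfo (f μ)) (-∑ u, ∑ y, D u y) μ₀ := by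
  have hrow u : HasDerivAt (fun μ => ∑ y, f μ u y) (∑ y, D u y) μ₀ :=
    .fun_sum fun y _ => hf u y
  have hcol y : HasDerivAt (fun μ => ∑ u, f μ u y) (∑ u, D u y) μ₀ :=
    .fun_sum fun u _ => hf u y
  have hterm u y := (hf u y).mul_log_sub_log_sub_log (hrow u) (hcol y) (ha u) (hb y) (hf₀ u y)
    (by simp only [hf₀, ← mul_sum, hb1, mul_one]) (by simp only [hf₀, ← sum_mul, ha1, one_mul])
  refine (HasDerivAt.fun_sum fun u _ => HasDerivAt.fun_sum fun y _ => hterm u y).congr_deriv ?_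
  simp only [sum_sub_distrib, ← sum_mul, ← mul_sum, hb1, ha1, one_mul]
  rw [sum_comm (f := fun u y => D u y)]
  ring

theorem sum_sum_eq_zero_of_hasDerivAt_of_eventually_const {f : ℝ → U → Y → ℝ} {D : U → Y → ℝ} {μ₀ c : ℝ}
    (hf : ∀ u y, HasDerivAt (fun μ => f μ u y) (D u y) μ₀)
    (hmass : ∀ᶠ μ in 𝓝 μ₀, ∑ u, ∑ y, f μ u y = c) :
    ∑ u, ∑ y, D u y = 0 :=
  (HasDerivAt.fun_sum fun u _ => HasDerivAt.fun_sum fun y _ => hf u y).unique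
    ((hasDerivAt_const μ₀ c).congr_of_eventuallyEq hmass)

end MutualInfo

theorem stmt_9_general {U X Y : Type*} [Fintype U] [Fintype X] [Fintype Y] [DecidableEq X]
    (x₀ : X) (W : X → Y → ℝ)
    (hW1 : ∀ x, ∑ y, W x y = 1) (hWpos : ∀ y, 0 < W x₀ y)
    (P : ℝ → U × X → ℝ)
    (hpmf : ∀ᶠ μ in nhds (0 : ℝ), (∀ p, 0 ≤ P μ p) ∧ ∑ p, P μ p = 1)
    (hdiff : ∀ u x, DifferentiableAt ℝ (fun μ => P μ (u, x)) 0)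
    (q : U → ℝ) (hq1 : ∑ u, q u = 1) (hqpos : ∀ u, 0 < q u)
    (hP0 : ∀ u x, P 0 (u, x) = q u * (if x = x₀ then 1 else 0)) :
    HasDerivAt (fun μ => mutualInfo (fun (u : U) (y : Y) => ∑ x, P μ (u, x) * W x y)) 0 0 := by
  have hf u y : HasDerivAt (fun μ => ∑ x, P μ (u, x) * W x y)
      (∑ x, deriv (fun μ => P μ (u, x)) 0 * W x y) 0 :=
    HasDerivAt.fun_sum fun x _ => (hdiff u x).hasDerivAt.mul_const _
  have hf₀ u y : ∑ x, P 0 (u, x) * W x y = q u * W x₀ y := by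
    simp [hP0, ite_mul]
  have hmass : ∀ᶠ μ in 𝓝 0, ∑ u, ∑ y, ∑ x, P μ (u, x) * W x y = 1 := by
    filter_upwards [hpmf] with μ hμ
    calc ∑ u, ∑ y, ∑ x, P μ (u, x) * W x y = ∑ u, ∑ x, P μ (u, x) * ∑ y, W x y := by
          simp only [mul_sum]; exact sum_congr rfl fun u _ => sum_comm
      _ = 1 := by simp only [hW1, mul_one, ← Fintype.sum_prod_type, hμ.2]
  simpa [sum_sum_eq_zero_of_hasDerivAt_of_eventually_const hf hmass] using
    hasDerivAt_mutualInfo_of_eq_mul hf (fun u => (hqpos u).ne') (fun y => (hWpos y).ne')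
      hq1 (hW1 x₀) hf₀

theorem stmt_9 {U X Y : Type*} [Fintype U] [Fintype X] [Fintype Y] [DecidableEq X]
    (x₀ : X) (W : X → Y → ℝ)
    (hW0 : ∀ x y, 0 ≤ W x y) (hW1 : ∀ x, ∑ y, W x y = 1) (hWpos : ∀ y, 0 < W x₀ y)
    (P : ℝ → U × X → ℝ)
    (hpmf : ∀ᶠ μ in nhds (0 : ℝ), (∀ p, 0 ≤ P μ p) ∧ ∑ p, P μ p = 1)
    (hdiff : ∀ u x, DifferentiableAt ℝ (fun μ => P μ (u, x)) 0)
    (q : U → ℝ) (hq0 : ∀ u, 0 ≤ q u) (hq1 : ∑ u, q u = 1) (hqpos : ∀ u, 0 < q u)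
    (hP0 : ∀ u x, P 0 (u, x) = q u * (if x = x₀ then 1 else 0)) :
    HasDerivAt (fun μ => mutualInfo (fun (u : U) (y : Y) => ∑ x, P μ (u, x) * W x y)) 0 0 :=
  stmt_9_general x₀ W hW1 hWpos P hpmf hdiff q hq1 hqpos hP0
end

section
/- Let U, X, Y be finite nonempty sets with a distinguished element x₀ ∈ X, let W assign to each x ∈ X a pmf W(·|x) on Y with W(y|x₀) > 0 for all y, and let α > 0. Then there exists a constant C > 0 (depending only on U, X, Y, W, x₀ and α) such that for every joint pmf P on U × X whose U-marginal satisfies P_U(u) = ∑_x P(u,x) ≥ α for all u ∈ U, the mutual information I of the joint function on U × Y given by (u,y) ↦ ∑_{x∈X} P(u,x)·W(y|x) satisfies I ≤ C·(1 − P_X(x₀))², where P_X(x) = ∑_u P(u,x). -/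
/-!
Compare the output law of every input row with the reference law `r = W(·|x₀)`. Replacing the
`Y`-marginal by any probability vector `r` can only increase the mutual information (Gibbs'
inequality), and then `log t ≤ t - 1` bounds each row's divergence from `r` by a χ²-distance.
The row `u` of the output law differs from `P_U(u)·r` by at most the mass `e_u = P_U(u) - P(u,x₀)`
that `u` puts off `x₀`, so its χ²-term is at most `e_u² / α · ∑_y 1 / r(y)`, and
`∑_u e_u² ≤ (∑_u e_u)² = (1 - P_X(x₀))²`.
-/

open Real

open Finset

lemma mul_log_sub_log_le_sub {a b : ℝ} (ha : 0 ≤ a) (hb : 0 < b) :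
    a * (log b - log a) ≤ b - a := by
  rcases ha.eq_or_lt with rfl | ha
  · simpa using hb.le
  have h := log_le_sub_one_of_pos (div_pos hb ha)
  rw [log_div hb.ne' ha.ne'] at h
  calc a * (log b - log a) ≤ a * (b / a - 1) := mul_le_mul_of_nonneg_left h ha.le
    _ = b - a := by field_simp

lemma mul_log_sub_log_le_sq_div_sub {a b : ℝ} (ha : 0 ≤ a) (hb : 0 < b) :
    a * (log a - log b) ≤ a ^ 2 / b - a := by
  rcases ha.eq_or_lt with rfl | ha
  · simp
  have h := log_le_sub_one_of_pos (div_pos ha hb)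
  rw [log_div ha.ne' hb.ne'] at h
  calc a * (log a - log b) ≤ a * (a / b - 1) := mul_le_mul_of_nonneg_left h ha.le
    _ = a ^ 2 / b - a := by ring

section MutualInformation

variable {U Y : Type*} [Fintype U] [Fintype Y] {q : U → Y → ℝ} {r : Y → ℝ}

theorem mutualInfo_le_of_sum_le (hq : ∀ u y, 0 ≤ q u y) (hr : ∀ y, 0 < r y)
    (hsum : ∑ y, r y ≤ ∑ u, ∑ y, q u y) :
    mutualInfo q ≤ ∑ u, ∑ y, q u y * (log (q u y) - log (∑ y', q u y') - log (r y)) := by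
  set qY : Y → ℝ := fun y => ∑ u, q u y
  have hgibbs : ∑ y, qY y * (log (r y) - log (qY y)) ≤ 0 :=
    calc ∑ y, qY y * (log (r y) - log (qY y)) ≤ ∑ y, (r y - qY y) :=
          sum_le_sum fun y _ => mul_log_sub_log_le_sub (sum_nonneg fun u _ => hq u y) (hr y)
      _ ≤ 0 := by rw [sum_sub_distrib, sum_comm]; linarith
  have hsplit : mutualInfo q = ∑ u, ∑ y, q u y * (log (q u y) - log (∑ y', q u y') - log (r y))
      + ∑ y, qY y * (log (r y) - log (qY y)) := by
    simp only [qY, sum_mul]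
    rw [sum_comm (f := fun y u => q u y * (log (r y) - log (∑ u', q u' y))), mutualInfo,
      ← sum_add_distrib]
    refine sum_congr rfl fun u _ => ?_
    rw [← sum_add_distrib]
    exact sum_congr rfl fun y _ => by ring
  linarith

theorem sum_mul_log_le_chiSq {p : Y → ℝ} (hp : ∀ y, 0 ≤ p y) (hmass : 0 < ∑ y, p y)
    (hr : ∀ y, 0 < r y) (hr1 : ∑ y, r y = 1) :
    ∑ y, p y * (log (p y) - log (∑ y', p y') - log (r y))
      ≤ ∑ y, (p y - (∑ y', p y') * r y) ^ 2 / ((∑ y', p y') * r y) := by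
  set c := ∑ y', p y'
  have hterm : ∀ y, p y * (log (p y) - log c - log (r y))
      ≤ (p y - c * r y) ^ 2 / (c * r y) + (p y - c * r y) := fun y => by
    have hcr : 0 < c * r y := mul_pos hmass (hr y)
    calc p y * (log (p y) - log c - log (r y)) = p y * (log (p y) - log (c * r y)) := by
          rw [log_mul hmass.ne' (hr y).ne']; ring
      _ ≤ p y ^ 2 / (c * r y) - p y := mul_log_sub_log_le_sq_div_sub (hp y) hcr
      _ = (p y - c * r y) ^ 2 / (c * r y) + (p y - c * r y) := by
          rw [div_add' _ _ _ hcr.ne', div_sub' hcr.ne']; ring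
  have hcentered : ∑ y, (p y - c * r y) = 0 := by
    rw [sum_sub_distrib, ← mul_sum, hr1, mul_one, sub_self]
  calc ∑ y, p y * (log (p y) - log c - log (r y))
      ≤ ∑ y, ((p y - c * r y) ^ 2 / (c * r y) + (p y - c * r y)) := sum_le_sum fun y _ => hterm y
    _ = ∑ y, (p y - c * r y) ^ 2 / (c * r y) := by rw [sum_add_distrib, hcentered, add_zero]

theorem mutualInfo_le_chiSq (hq : ∀ u y, 0 ≤ q u y) (hrow : ∀ u, 0 < ∑ y, q u y)
    (hr : ∀ y, 0 < r y) (hr1 : ∑ y, r y = 1) (hmass : 1 ≤ ∑ u, ∑ y, q u y) :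
    mutualInfo q
      ≤ ∑ u, ∑ y, (q u y - (∑ y', q u y') * r y) ^ 2 / ((∑ y', q u y') * r y) :=
  (mutualInfo_le_of_sum_le hq hr (hr1.trans_le hmass)).trans <|
    sum_le_sum fun u _ => sum_mul_log_le_chiSq (hq u) (hrow u) hr hr1

end MutualInformation

lemma abs_sub_le_one_of_sum_eq_one {Y : Type*} [Fintype Y] {f g : Y → ℝ} (hf0 : ∀ y, 0 ≤ f y)
    (hf1 : ∑ y, f y = 1) (hg0 : ∀ y, 0 ≤ g y) (hg1 : ∑ y, g y = 1) (y : Y) :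
    |f y - g y| ≤ 1 := by
  have hf := hf1 ▸ single_le_sum (fun y _ => hf0 y) (mem_univ y)
  have hg := hg1 ▸ single_le_sum (fun y _ => hg0 y) (mem_univ y)
  exact abs_sub_le_iff.2 ⟨by linarith [hg0 y], by linarith [hf0 y]⟩

section Channel

variable {X Y : Type*} [Fintype X] [Fintype Y] {W : X → Y → ℝ}

lemma sum_sum_mul_eq_sum (hW1 : ∀ x, ∑ y, W x y = 1) (p : X → ℝ) :
    ∑ y, ∑ x, p x * W x y = ∑ x, p x := by
  rw [sum_comm]
  simp only [← mul_sum, hW1, mul_one]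

lemma abs_sum_mul_sub_le [DecidableEq X] (hW0 : ∀ x y, 0 ≤ W x y) (hW1 : ∀ x, ∑ y, W x y = 1)
    {p : X → ℝ} (hp : ∀ x, 0 ≤ p x) (x₀ : X) (y : Y) :
    |∑ x, p x * W x y - (∑ x, p x) * W x₀ y| ≤ ∑ x, p x - p x₀ :=
  calc |∑ x, p x * W x y - (∑ x, p x) * W x₀ y|
        = |∑ x ∈ univ.erase x₀, p x * (W x y - W x₀ y)| := by
          rw [sum_erase _ (by simp), sum_mul, ← sum_sub_distrib]
          simp only [mul_sub]
    _ ≤ ∑ x ∈ univ.erase x₀, p x := (abs_sum_le_sum_abs _ _).trans <| sum_le_sum fun x _ => by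
          rw [abs_mul, abs_of_nonneg (hp x)]
          exact mul_le_of_le_one_right (hp x)
            (abs_sub_le_one_of_sum_eq_one (hW0 x) (hW1 x) (hW0 x₀) (hW1 x₀) y)
    _ = ∑ x, p x - p x₀ := sum_erase_eq_sub (mem_univ x₀)

lemma chiSq_channel_output_le [DecidableEq X] (hW0 : ∀ x y, 0 ≤ W x y)
    (hW1 : ∀ x, ∑ y, W x y = 1) {x₀ : X} (hWpos : ∀ y, 0 < W x₀ y) {p : X → ℝ}
    (hp : ∀ x, 0 ≤ p x) {α : ℝ} (hα : 0 < α) (hpα : α ≤ ∑ x, p x) :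
    ∑ y, (∑ x, p x * W x y - (∑ x, p x) * W x₀ y) ^ 2 / ((∑ x, p x) * W x₀ y)
      ≤ (∑ x, p x - p x₀) ^ 2 / α * ∑ y, (W x₀ y)⁻¹ := by
  rw [mul_sum]
  refine sum_le_sum fun y _ => ?_
  have hdev := abs_le.1 (abs_sum_mul_sub_le hW0 hW1 hp x₀ y)
  calc (∑ x, p x * W x y - (∑ x, p x) * W x₀ y) ^ 2 / ((∑ x, p x) * W x₀ y)
      ≤ (∑ x, p x - p x₀) ^ 2 / (α * W x₀ y) :=
        div_le_div₀ (sq_nonneg _) (sq_le_sq' hdev.1 hdev.2) (mul_pos hα (hWpos y))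
          (mul_le_mul_of_nonneg_right hpα (hWpos y).le)
    _ = (∑ x, p x - p x₀) ^ 2 / α * (W x₀ y)⁻¹ := by ring

end Channel

theorem stmt_10_general {U X Y : Type*} [Fintype U] [Fintype X] [Fintype Y]
    [Nonempty Y]
    (x₀ : X) (W : X → Y → ℝ)
    (hW0 : ∀ x y, 0 ≤ W x y) (hW1 : ∀ x, ∑ y, W x y = 1) (hWpos : ∀ y, 0 < W x₀ y)
    (α : ℝ) (hα : 0 < α) :
    ∃ C > 0, ∀ P : U × X → ℝ, (∀ p, 0 ≤ P p) → (∑ p, P p) = 1 →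
      (∀ u, α ≤ ∑ x, P (u, x)) →
      mutualInfo (fun (u : U) (y : Y) => ∑ x, P (u, x) * W x y)
        ≤ C * (1 - ∑ u, P (u, x₀)) ^ 2 := by
  classical
  set S := ∑ y, (W x₀ y)⁻¹
  have hS : 0 < S := sum_pos (fun y _ => inv_pos.2 (hWpos y)) univ_nonempty
  refine ⟨S / α, div_pos hS hα, fun P hP0 hP1 hPU => ?_⟩
  rw [Fintype.sum_prod_type] at hP1
  have hrow : ∀ u, ∑ y, ∑ x, P (u, x) * W x y = ∑ x, P (u, x) :=
    fun u => sum_sum_mul_eq_sum hW1 _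
  have hdefect : ∑ u, (∑ x, P (u, x) - P (u, x₀)) = 1 - ∑ u, P (u, x₀) := by
    rw [sum_sub_distrib, hP1]
  calc mutualInfo (fun u y => ∑ x, P (u, x) * W x y)
      ≤ ∑ u, ∑ y, (∑ x, P (u, x) * W x y - (∑ x, P (u, x)) * W x₀ y) ^ 2
          / ((∑ x, P (u, x)) * W x₀ y) := by
        refine (mutualInfo_le_chiSq
          (fun u y => sum_nonneg fun x _ => mul_nonneg (hP0 _) (hW0 x y))
          (fun u => (hrow u).symm ▸ hα.trans_le (hPU u)) hWpos (hW1 x₀)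
          (by simp only [hrow, hP1, le_refl])).trans_eq ?_
        simp only [hrow]
    _ ≤ ∑ u, (∑ x, P (u, x) - P (u, x₀)) ^ 2 / α * S :=
        sum_le_sum fun u _ => chiSq_channel_output_le hW0 hW1 hWpos (fun x => hP0 _) hα (hPU u)
    _ ≤ (∑ u, (∑ x, P (u, x) - P (u, x₀))) ^ 2 / α * S := by
        rw [← sum_mul, ← sum_div]
        refine mul_le_mul_of_nonneg_right (div_le_div_of_nonneg_right ?_ hα.le) hS.le
        exact sum_sq_le_sq_sum_of_nonneg fun u _ =>
          sub_nonneg.2 (single_le_sum (fun x _ => hP0 (u, x)) (mem_univ x₀))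
    _ = S / α * (1 - ∑ u, P (u, x₀)) ^ 2 := by rw [hdefect]; ring

theorem stmt_10 {U X Y : Type*} [Fintype U] [Fintype X] [Fintype Y]
    [Nonempty U] [Nonempty X] [Nonempty Y]
    (x₀ : X) (W : X → Y → ℝ)
    (hW0 : ∀ x y, 0 ≤ W x y) (hW1 : ∀ x, ∑ y, W x y = 1) (hWpos : ∀ y, 0 < W x₀ y)
    (α : ℝ) (hα : 0 < α) :
    ∃ C > 0, ∀ P : U × X → ℝ, (∀ p, 0 ≤ P p) → (∑ p, P p) = 1 →
      (∀ u, α ≤ ∑ x, P (u, x)) →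
      mutualInfo (fun (u : U) (y : Y) => ∑ x, P (u, x) * W x y)
        ≤ C * (1 - ∑ u, P (u, x₀)) ^ 2 :=
  stmt_10_general x₀ W hW0 hW1 hWpos α hα
end

section
/- Let U, X, Y₁, Y₂ be finite sets, P_{UX} a joint pmf on U × X, W₁ a channel assigning to each x ∈ X a pmf W₁(·|x) on Y₁, and W₂ a channel assigning to each y₁ ∈ Y₁ a pmf W₂(·|y₁) on Y₂ (so that U → X → Y₁ → Y₂ is a Markov chain). Define: I(X;Y₁) as the mutual information of the joint function (x,y₁) ↦ P_X(x)·W₁(y₁|x) where P_X(x) = ∑_u P_{UX}(u,x); I(U;Y₂) as the mutual information of the joint function (u,y₂) ↦ ∑_{x,y₁} P_{UX}(u,x)·W₁(y₁|x)·W₂(y₂|y₁); and the conditional mutual information I(X;Y₁|U) = ∑_{u,x,y₁} P_{UX}(u,x)·W₁(y₁|x)·(Real.log(W₁(y₁|x)) + Real.log(P_U(u)) − Real.log(∑_{x'} P_{UX}(u,x')·W₁(y₁|x'))), where P_U(u) = ∑_x P_{UX}(u,x). Then I(X;Y₁|U) + I(U;Y₂) ≤ I(X;Y₁). -/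
open Real

/-!
The chain rule splits `I(X;Y₁)` as `I(X;Y₁|U) + I(U;Y₁)`, so it remains to prove the
data-processing inequality `I(U;Y₂) ≤ I(U;Y₁)` for the channel `W₂`. Writing `R` for the joint
law of `(U, Y₁)`, this is the log-sum inequality applied, for every `u` and `y₂`, to the weights
`R(u,y₁) W₂(y₁,y₂)` against `R_{Y₁}(y₁) W₂(y₁,y₂)`, summed over `y₁`.
-/

namespace Real

theorem sub_le_mul_log_sub_log {x y : ℝ} (hx : 0 ≤ x) (hy : 0 ≤ y) (hxy : y = 0 → x = 0) :
    x - y ≤ x * (log x - log y) := by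
  rcases hx.eq_or_lt with rfl | hx
  · simpa using hy
  have hy : 0 < y := hy.lt_of_ne fun h => hx.ne' (hxy h.symm)
  have h := mul_le_mul_of_nonneg_left (log_le_sub_one_of_pos (div_pos hy hx)) hx.le
  have hxy : x * (y / x - 1) = y - x := by field_simp
  rw [log_div hy.ne' hx.ne', hxy] at h
  linarith

theorem mul_log_mul_sub_log_mul {x y w : ℝ} (hxy : y = 0 → x = 0) :
    x * w * (log (x * w) - log (y * w)) = x * w * (log x - log y) := by
  rcases eq_or_ne x 0 with rfl | hx
  · simp
  rcases eq_or_ne w 0 with rfl | hw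
  · simp
  have hy : y ≠ 0 := fun h => hx (hxy h)
  rw [log_mul hx hw, log_mul hy hw]
  ring

theorem mul_mul_log_mul_sub_log (x y : ℝ) :
    x * y * (log (x * y) - log x) = x * y * log y := by
  rcases eq_or_ne x 0 with rfl | hx
  · simp
  rcases eq_or_ne y 0 with rfl | hy
  · simp
  rw [log_mul hx hy]
  ring

/-- The log-sum inequality. -/
theorem sum_mul_log_sum_sub_log_sum_le {ι : Type*} [Fintype ι] {a b : ι → ℝ}
    (ha : ∀ i, 0 ≤ a i) (hb : ∀ i, 0 ≤ b i) (hab : ∀ i, b i = 0 → a i = 0) :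
    (∑ i, a i) * (log (∑ i, a i) - log (∑ i, b i)) ≤ ∑ i, a i * (log (a i) - log (b i)) := by
  set A := ∑ i, a i
  set B := ∑ i, b i
  rcases (Finset.sum_nonneg fun i _ => ha i : 0 ≤ A).eq_or_lt with hA | hA
  · have h0 : ∀ i, a i = 0 := fun i =>
      (Finset.sum_eq_zero_iff_of_nonneg fun i _ => ha i).mp hA.symm i (Finset.mem_univ i)
    simp [h0, A]
  have hB : 0 < B := by
    refine (Finset.sum_nonneg fun i _ => hb i).lt_of_ne fun hB => hA.ne' ?_
    refine Finset.sum_eq_zero fun i _ => hab i ?_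
    exact (Finset.sum_eq_zero_iff_of_nonneg fun i _ => hb i).mp hB.symm i (Finset.mem_univ i)
  -- Compare `a` with `b` rescaled to the same total mass.
  have hterm : ∀ i, a i - b i * (A / B) ≤
      a i * (log (a i) - log (b i)) - a i * (log A - log B) := by
    intro i
    rcases eq_or_ne (b i) 0 with hbi | hbi
    · simp [hbi, hab i hbi]
    have h := sub_le_mul_log_sub_log (y := b i * (A / B)) (ha i) (by have := hb i; positivity)
      (fun h => absurd h (mul_ne_zero hbi (div_pos hA hB).ne'))
    rw [log_mul hbi (div_pos hA hB).ne', log_div hA.ne' hB.ne'] at h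
    linarith
  have hsum := Finset.sum_le_sum fun i (_ : i ∈ Finset.univ) => hterm i
  rw [Finset.sum_sub_distrib, Finset.sum_sub_distrib, ← Finset.sum_mul, ← Finset.sum_mul,
    mul_div_cancel₀ _ hB.ne', sub_self] at hsum
  linarith

end Real

theorem sum_mul_sum_eq_sum_sum_mul {U X Y : Type*} [Fintype U] [Fintype X]
    (P : U → X → ℝ) (W : X → Y → ℝ) (y : Y) :
    ∑ x, (∑ u, P u x) * W x y = ∑ u, ∑ x, P u x * W x y := by
  simp_rw [Finset.sum_mul]
  exact Finset.sum_comm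

section

variable {U X Y Z : Type*} [Fintype U] [Fintype X] [Fintype Y] [Fintype Z]

theorem sum_sum_mul_of_sum_eq_one (p : X → ℝ) {W : X → Y → ℝ} (hW : ∀ x, ∑ y, W x y = 1) :
    ∑ y, ∑ x, p x * W x y = ∑ x, p x := by
  rw [Finset.sum_comm]
  exact Finset.sum_congr rfl fun x _ => by rw [← Finset.mul_sum, hW, mul_one]

theorem mutualInfo_eq_sub (P : U → Y → ℝ) :
    mutualInfo P = ∑ u, ∑ y, P u y * (log (P u y) - log (∑ u', P u' y))
      - ∑ u, (∑ y, P u y) * log (∑ y, P u y) := by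
  unfold mutualInfo
  rw [← Finset.sum_sub_distrib]
  refine Finset.sum_congr rfl fun u _ => ?_
  rw [Finset.sum_mul, ← Finset.sum_sub_distrib]
  exact Finset.sum_congr rfl fun y _ => by ring

theorem mutualInfo_comp_le (R : U → Y → ℝ) (hR : ∀ u y, 0 ≤ R u y)
    {W : Y → Z → ℝ} (hW0 : ∀ y z, 0 ≤ W y z) (hW1 : ∀ y, ∑ z, W y z = 1) :
    mutualInfo (fun u z => ∑ y, R u y * W y z) ≤ mutualInfo R := by
  rw [mutualInfo_eq_sub, mutualInfo_eq_sub]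
  simp only [sum_sum_mul_of_sum_eq_one _ hW1]
  gcongr with u
  have hsupp : ∀ y, ∑ u', R u' y = 0 → R u y = 0 := fun y h =>
    le_antisymm (h ▸ Finset.single_le_sum (fun u' _ => hR u' y) (Finset.mem_univ u)) (hR u y)
  calc ∑ z, (∑ y, R u y * W y z) * (log (∑ y, R u y * W y z) - log (∑ u', ∑ y, R u' y * W y z))
      ≤ ∑ z, ∑ y, R u y * W y z * (log (R u y) - log (∑ u', R u' y)) := by
        gcongr with z
        rw [← sum_mul_sum_eq_sum_sum_mul]
        have hab : ∀ y, (∑ u', R u' y) * W y z = 0 → R u y * W y z = 0 := fun y h => by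
          rcases mul_eq_zero.mp h with h | h
          · rw [hsupp y h, zero_mul]
          · rw [h, mul_zero]
        refine (sum_mul_log_sum_sub_log_sum_le (fun y => mul_nonneg (hR u y) (hW0 y z))
          (fun y => mul_nonneg (Finset.sum_nonneg fun u' _ => hR u' y) (hW0 y z)) hab).trans_eq ?_
        exact Finset.sum_congr rfl fun y _ => mul_log_mul_sub_log_mul (hsupp y)
    _ = ∑ y, R u y * (log (R u y) - log (∑ u', R u' y)) := by
        rw [Finset.sum_comm]
        refine Finset.sum_congr rfl fun y _ => ?_
        simp_rw [mul_right_comm (R u y) (W y _)]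
        rw [← Finset.mul_sum, hW1, mul_one]

noncomputable def condMutualInfo (P : U → X → ℝ) (W : X → Y → ℝ) : ℝ :=
  ∑ u, ∑ x, ∑ y, P u x * W x y *
    (log (W x y) + log (∑ x', P u x') - log (∑ x', P u x' * W x' y))

theorem mutualInfo_eq_condMutualInfo_add (P : U → X → ℝ) {W : X → Y → ℝ}
    (hW : ∀ x, ∑ y, W x y = 1) :
    mutualInfo (fun x y => (∑ u, P u x) * W x y)
      = condMutualInfo P W + mutualInfo (fun u y => ∑ x, P u x * W x y) := by
  set Q : Y → ℝ := fun y => ∑ x, (∑ u, P u x) * W x y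
  have hXY : mutualInfo (fun x y => (∑ u, P u x) * W x y)
      = ∑ u, ∑ x, ∑ y, P u x * W x y * (log (W x y) - log (Q y)) := by
    calc _ = ∑ x, ∑ y, (∑ u, P u x) * W x y * (log (W x y) - log (Q y)) := by
          refine Finset.sum_congr rfl fun x _ => Finset.sum_congr rfl fun y _ => ?_
          rw [← Finset.mul_sum, hW, mul_one]
          linear_combination mul_mul_log_mul_sub_log (∑ u, P u x) (W x y)
      _ = ∑ x, ∑ u, ∑ y, P u x * W x y * (log (W x y) - log (Q y)) := by
          simp_rw [Finset.sum_mul]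
          exact Finset.sum_congr rfl fun x _ => Finset.sum_comm
      _ = _ := Finset.sum_comm
  have hUY : mutualInfo (fun u y => ∑ x, P u x * W x y)
      = ∑ u, ∑ x, ∑ y, P u x * W x y *
          (log (∑ x', P u x' * W x' y) - log (∑ x', P u x') - log (Q y)) := by
    unfold mutualInfo
    refine Finset.sum_congr rfl fun u _ => ?_
    rw [sum_sum_mul_of_sum_eq_one _ hW, Finset.sum_comm]
    refine Finset.sum_congr rfl fun y _ => ?_
    rw [← sum_mul_sum_eq_sum_sum_mul, Finset.sum_mul]
  rw [hXY, hUY, condMutualInfo]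
  simp only [← Finset.sum_add_distrib]
  refine Finset.sum_congr rfl fun u _ => Finset.sum_congr rfl fun x _ =>
    Finset.sum_congr rfl fun y _ => ?_
  ring

end

theorem stmt_11_general {U X Y₁ Y₂ : Type*} [Fintype U] [Fintype X] [Fintype Y₁] [Fintype Y₂]
    (P : U → X → ℝ) (hP0 : ∀ u x, 0 ≤ P u x)
    (W₁ : X → Y₁ → ℝ) (hW₁0 : ∀ x y₁, 0 ≤ W₁ x y₁) (hW₁1 : ∀ x, ∑ y₁, W₁ x y₁ = 1)
    (W₂ : Y₁ → Y₂ → ℝ) (hW₂0 : ∀ y₁ y₂, 0 ≤ W₂ y₁ y₂) (hW₂1 : ∀ y₁, ∑ y₂, W₂ y₁ y₂ = 1) :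
    (∑ u, ∑ x, ∑ y₁, P u x * W₁ x y₁ *
        (Real.log (W₁ x y₁) + Real.log (∑ x', P u x')
          - Real.log (∑ x', P u x' * W₁ x' y₁)))
      + mutualInfo (fun (u : U) (y₂ : Y₂) => ∑ x, ∑ y₁, P u x * W₁ x y₁ * W₂ y₁ y₂)
      ≤ mutualInfo (fun (x : X) (y₁ : Y₁) => (∑ u, P u x) * W₁ x y₁) := by
  have hUY₂ : (fun u y₂ => ∑ x, ∑ y₁, P u x * W₁ x y₁ * W₂ y₁ y₂)
      = fun u y₂ => ∑ y₁, (∑ x, P u x * W₁ x y₁) * W₂ y₁ y₂ := by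
    funext u y₂
    rw [Finset.sum_comm]
    simp_rw [Finset.sum_mul]
  have hR : ∀ u y₁, 0 ≤ ∑ x, P u x * W₁ x y₁ := fun u y₁ =>
    Finset.sum_nonneg fun x _ => mul_nonneg (hP0 u x) (hW₁0 x y₁)
  show condMutualInfo P W₁ + _ ≤ _
  rw [hUY₂, mutualInfo_eq_condMutualInfo_add P hW₁1]
  exact add_le_add_right (mutualInfo_comp_le _ hR hW₂0 hW₂1) _

theorem stmt_11 {U X Y₁ Y₂ : Type*} [Fintype U] [Fintype X] [Fintype Y₁] [Fintype Y₂]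
    (P : U → X → ℝ) (hP0 : ∀ u x, 0 ≤ P u x) (hP1 : ∑ u, ∑ x, P u x = 1)
    (W₁ : X → Y₁ → ℝ) (hW₁0 : ∀ x y₁, 0 ≤ W₁ x y₁) (hW₁1 : ∀ x, ∑ y₁, W₁ x y₁ = 1)
    (W₂ : Y₁ → Y₂ → ℝ) (hW₂0 : ∀ y₁ y₂, 0 ≤ W₂ y₁ y₂) (hW₂1 : ∀ y₁, ∑ y₂, W₂ y₁ y₂ = 1) :
    (∑ u, ∑ x, ∑ y₁, P u x * W₁ x y₁ *
        (Real.log (W₁ x y₁) + Real.log (∑ x', P u x')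
          - Real.log (∑ x', P u x' * W₁ x' y₁)))
      + mutualInfo (fun (u : U) (y₂ : Y₂) => ∑ x, ∑ y₁, P u x * W₁ x y₁ * W₂ y₁ y₂)
      ≤ mutualInfo (fun (x : X) (y₁ : Y₁) => (∑ u, P u x) * W₁ x y₁) :=
  stmt_11_general P hP0 W₁ hW₁0 hW₁1 W₂ hW₂0 hW₂1
end

section
/- Let X be a finite set with a distinguished element x₀, Y a finite set, and W a channel assigning to each x ∈ X a pmf W(·|x) on Y with W(y|x₀) > 0 for all y. Fix x₁ ∈ X with x₁ ≠ x₀. For α ∈ ℝ let I(α) denote the mutual information of the joint function on X × Y given by (x,y) ↦ ((1−α)·1{x = x₀} + α·1{x = x₁})·W(y|x). Then the map α ↦ I(α) has a derivative at α = 0, equal to D(W(·|x₁) ‖ W(·|x₀)). -/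
open Real

lemma hasDerivAt_klDiv_right {Z : Type*} [Fintype Z] {p : Z → ℝ} {Q : ℝ → Z → ℝ}
    {Q' : Z → ℝ} {a : ℝ} (hQ : ∀ z, HasDerivAt (fun t => Q t z) (Q' z) a)
    (hQa : ∀ z, Q a z ≠ 0) :
    HasDerivAt (fun t => klDiv p (Q t)) (-∑ z, p z * (Q' z / Q a z)) a := by
  unfold klDiv
  rw [← Finset.sum_neg_distrib]
  refine HasDerivAt.fun_sum fun z _ => ?_
  simpa using (((hQ z).log (hQa z)).const_sub (Real.log (p z))).const_mul (p z)

lemma mutualInfo_mul_channel {X Y : Type*} [Fintype X] [Fintype Y] (w : X → ℝ)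
    {W : X → Y → ℝ} (hW1 : ∀ x, ∑ y, W x y = 1) :
    mutualInfo (fun x y => w x * W x y)
      = ∑ x, w x * klDiv (W x) (fun y => ∑ x', w x' * W x' y) := by
  unfold mutualInfo klDiv
  simp only [← Finset.mul_sum, hW1, mul_one]
  refine Finset.sum_congr rfl fun x _ => ?_
  rw [Finset.mul_sum]
  refine Finset.sum_congr rfl fun y _ => ?_
  rcases eq_or_ne (w x) 0 with hw | hw
  · simp [hw]
  rcases eq_or_ne (W x y) 0 with hW | hW
  · simp [hW]
  rw [Real.log_mul hw hW]
  ring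

lemma sum_twoPointMix_mul {X : Type*} [Fintype X] [DecidableEq X] (x₀ x₁ : X) (α : ℝ)
    (f : X → ℝ) :
    ∑ x, ((1 - α) * (if x = x₀ then 1 else 0) + α * (if x = x₁ then 1 else 0)) * f x
      = (1 - α) * f x₀ + α * f x₁ := by
  simp [add_mul, Finset.sum_add_distrib]

lemma mutualInfo_twoPointMix {X Y : Type*} [Fintype X] [Fintype Y] [DecidableEq X]
    (x₀ x₁ : X) {W : X → Y → ℝ} (hW1 : ∀ x, ∑ y, W x y = 1) (α : ℝ) :
    mutualInfo (fun x y =>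
        ((1 - α) * (if x = x₀ then 1 else 0) + α * (if x = x₁ then 1 else 0)) * W x y)
      = (1 - α) * klDiv (W x₀) (fun y => (1 - α) * W x₀ y + α * W x₁ y)
        + α * klDiv (W x₁) (fun y => (1 - α) * W x₀ y + α * W x₁ y) := by
  simp only [mutualInfo_mul_channel _ hW1, sum_twoPointMix_mul]

theorem stmt_12_general {X Y : Type*} [Fintype X] [Fintype Y] [DecidableEq X]
    (x₀ x₁ : X) (W : X → Y → ℝ)
    (hW1 : ∀ x, ∑ y, W x y = 1) (hWpos : ∀ y, 0 < W x₀ y) :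
    HasDerivAt (fun α : ℝ => mutualInfo (fun (x : X) (y : Y) =>
        ((1 - α) * (if x = x₀ then 1 else 0) + α * (if x = x₁ then 1 else 0)) * W x y))
      (klDiv (W x₁) (W x₀)) 0 := by
  simp only [mutualInfo_twoPointMix x₀ x₁ hW1]
  set q : ℝ → Y → ℝ := fun α y => (1 - α) * W x₀ y + α * W x₁ y
  have hq : ∀ y, HasDerivAt (fun α => q α y) (W x₁ y - W x₀ y) 0 := fun y =>
    ((((hasDerivAt_id (0 : ℝ)).const_sub 1).mul_const (W x₀ y)).add
      ((hasDerivAt_id (0 : ℝ)).mul_const (W x₁ y))).congr_deriv (by ring)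
  have hq0 : q 0 = W x₀ := by funext y; simp [q]
  have hq0pos : ∀ y, q 0 y ≠ 0 := fun y => hq0 ▸ (hWpos y).ne'
  have hfirst_order : ∑ y, W x₀ y * ((W x₁ y - W x₀ y) / W x₀ y) = 0 := by
    rw [Finset.sum_congr rfl fun y _ => mul_div_cancel₀ _ (hWpos y).ne',
      Finset.sum_sub_distrib, hW1, hW1, sub_self]
  have hderiv := (((hasDerivAt_id (0 : ℝ)).const_sub 1).mul
      (hasDerivAt_klDiv_right (p := W x₀) hq hq0pos)).add
    ((hasDerivAt_id (0 : ℝ)).mul (hasDerivAt_klDiv_right (p := W x₁) hq hq0pos))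
  refine hderiv.congr_deriv ?_
  simp [hfirst_order, hq0, klDiv_self]

theorem stmt_12 {X Y : Type*} [Fintype X] [Fintype Y] [DecidableEq X]
    (x₀ x₁ : X) (hne : x₁ ≠ x₀) (W : X → Y → ℝ)
    (hW0 : ∀ x y, 0 ≤ W x y) (hW1 : ∀ x, ∑ y, W x y = 1) (hWpos : ∀ y, 0 < W x₀ y) :
    HasDerivAt (fun α : ℝ => mutualInfo (fun (x : X) (y : Y) =>
        ((1 - α) * (if x = x₀ then 1 else 0) + α * (if x = x₁ then 1 else 0)) * W x y))
      (klDiv (W x₁) (W x₀)) 0 :=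
  stmt_12_general x₀ x₁ W hW1 hWpos
end
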